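/- arXiv:1606.02154 — 4 statements merged into one kernel-verified Lean document; each statement's English description precedes it below -/
import Mathlib

section
/- In a connected graph, any finite family of pairwise intersecting gated sets has a nonempty intersection (Helly property for gated sets). -/
variable {α : Type*}

/-- `g` is a gate of `x` in the set `H`: `g ∈ H` and `g` lies on a shortest
path from `x` to every vertex of `H`. -/
def HasGate (G : SimpleGraph α) (H : Set α) (x g : α) : Prop :=
  g ∈ H ∧ ∀ y ∈ H, G.dist x y = G.dist x g + G.dist g y

/-- `H` is gated: every vertex has a gate in `H`. -/
def Gated (G : SimpleGraph α) (H : Set α) : Prop := ∀ x, ∃ g, HasGate G H x g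

/-- `W` is (geodesically) convex: it contains every vertex on a shortest path
between two of its vertices. -/
def GConvex (G : SimpleGraph α) (W : Set α) : Prop :=
  ∀ u ∈ W, ∀ v ∈ W, ∀ w, G.dist u w + G.dist w v = G.dist u v → w ∈ W

/-- The convex hull of `A` in `G`. -/
def convHull (G : SimpleGraph α) (A : Set α) : Set α := ⋂₀ {W | GConvex G W ∧ A ⊆ W}

/-- Adjacency of a cycle on `ZMod n`. -/
def cycleAdj (n : ℕ) (x y : ZMod n) : Prop := x ≠ y ∧ (y = x + 1 ∨ x = y + 1)

/-- The cycle graph on `ZMod n`. -/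
def cycGraph (n : ℕ) : SimpleGraph (ZMod n) where
  Adj x y := cycleAdj n x y
  symm := by
    constructor
    rintro x y ⟨h1, h2⟩
    exact ⟨Ne.symm h1, h2.symm⟩
  loopless := by
    constructor
    rintro x ⟨h1, _⟩
    exact h1 rfl

/-- `C` is (the vertex set of) an isometric cycle of `G`: internal (cyclic)
distances agree with distances in `G`. -/
def IsIsoCycle (G : SimpleGraph α) (C : Set α) : Prop :=
  ∃ (n : ℕ) (c : ZMod n → α), 3 ≤ n ∧ Function.Injective c ∧
    (∀ i, G.Adj (c i) (c (i + 1))) ∧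
    (∀ i j, G.dist (c i) (c j) = (cycGraph n).dist i j) ∧
    C = Set.range c

/-- `S` is an antipodal subgraph of `G`: every `x ∈ S` has an antipode `y ∈ S`
with `S = conv(x, y)`. -/
def AntipodalSub (G : SimpleGraph α) (S : Set α) : Prop :=
  ∀ x ∈ S, ∃ y ∈ S, S = convHull G {x, y}

/-- The halfspace-like set `W(u,v)` of vertices strictly closer to `u` than to `v`. -/
def Wset (G : SimpleGraph α) (u v : α) : Set α := {x | G.dist x u < G.dist x v}

/-!
A gated set is convex, so if `x` lies in a gated set `A` meeting a gated set `B`, the gate of `x`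
in `B` stays in `A`. Hence the gate in `C` of a point of `A ∩ B` lies in `A ∩ B ∩ C` (Helly for
three sets), and `A ∩ B` is itself gated, its gates being obtained by composing the gates of `A`
and `B`. Replacing two members of the family by their intersection keeps it pairwise
intersecting and gated, so induction on the family finishes the proof.
-/

section Helly

variable {G : SimpleGraph α}

lemma Gated.gConvex (hG : G.Connected) {W : Set α} (hW : Gated G W) : GConvex G W := by
  intro u hu v hv w hw
  obtain ⟨g, hgW, hgate⟩ := hW w
  -- `d(u,v) = d(u,w) + d(w,v) = 2 d(w,g) + d(g,u) + d(g,v)`, so the triangle inequality forces `g = w`.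
  have hu := hgate u hu
  have hv := hgate v hv
  have htri : G.dist u v ≤ G.dist u g + G.dist g v := hG.dist_triangle
  have hwu : G.dist u w = G.dist w u := G.dist_comm
  have hgu : G.dist u g = G.dist g u := G.dist_comm
  have hwg : G.dist w g = 0 := by omega
  rwa [hG.dist_eq_zero_iff.mp hwg]

lemma HasGate.mem_of_gConvex {A B : Set α} (hA : GConvex G A) (hAB : (A ∩ B).Nonempty)
    {x g : α} (hx : x ∈ A) (hg : HasGate G B x g) : g ∈ A := by
  obtain ⟨z, hzA, hzB⟩ := hAB
  exact hA x hx z hzA g (hg.2 z hzB).symm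

lemma Gated.inter (hG : G.Connected) {A B : Set α} (hA : Gated G A) (hB : Gated G B)
    (hAB : (A ∩ B).Nonempty) : Gated G (A ∩ B) := by
  intro x
  obtain ⟨g, hgA, hgate⟩ := hA x
  obtain ⟨h, hh⟩ := hB g
  have hhA : h ∈ A := hh.mem_of_gConvex (hA.gConvex hG) hAB hgA
  refine ⟨h, ⟨hhA, hh.1⟩, fun y hy => ?_⟩
  rw [hgate y hy.1, hh.2 y hy.2, hgate h hhA, add_assoc]

lemma Gated.inter_inter_nonempty (hG : G.Connected) {A B C : Set α} (hA : Gated G A)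
    (hB : Gated G B) (hC : Gated G C) (hAB : (A ∩ B).Nonempty) (hAC : (A ∩ C).Nonempty)
    (hBC : (B ∩ C).Nonempty) : (A ∩ B ∩ C).Nonempty := by
  obtain ⟨x, hxA, hxB⟩ := hAB
  obtain ⟨g, hg⟩ := hC x
  exact ⟨g, ⟨hg.mem_of_gConvex (hA.gConvex hG) hAC hxA,
    hg.mem_of_gConvex (hB.gConvex hG) hBC hxB⟩, hg.1⟩

lemma gated_univ : Gated G Set.univ :=
  fun x => ⟨x, Set.mem_univ x, fun y _ => by rw [G.dist_self, zero_add]⟩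

lemma gated_biInter_and_inter_nonempty (hG : G.Connected) {ι : Type*} {W : ι → Set α}
    (hgated : ∀ i, Gated G (W i)) (hpair : ∀ i j, (W i ∩ W j).Nonempty) (s : Finset ι) :
    Gated G (⋂ i ∈ s, W i) ∧ ∀ k, ((⋂ i ∈ s, W i) ∩ W k).Nonempty := by
  classical
  induction s using Finset.induction_on with
  | empty => simpa using ⟨gated_univ, fun k => (hpair k k).mono Set.inter_subset_left⟩
  | insert a s _ ih =>
    obtain ⟨hs, hsW⟩ := ih
    rw [Finset.set_biInter_insert]
    have has : (W a ∩ ⋂ i ∈ s, W i).Nonempty := Set.inter_comm _ _ ▸ hsW a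
    exact ⟨(hgated a).inter hG hs has, fun k =>
      (hgated a).inter_inter_nonempty hG hs (hgated k) has (hpair a k) (hsW k)⟩

end Helly

/-- Helly property for gated sets: in a connected graph, any finite family of
pairwise intersecting gated sets has a nonempty intersection. -/
theorem stmt2 (G : SimpleGraph α) (hG : G.Connected)
    (ι : Type*) [Finite ι] (W : ι → Set α)
    (hgated : ∀ i, Gated G (W i))
    (hpair : ∀ i j, (W i ∩ W j).Nonempty) :
    (⋂ i, W i).Nonempty := by
  rcases isEmpty_or_nonempty ι with hι | ⟨⟨j⟩⟩
  · rw [Set.iInter_of_empty]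
    exact ⟨hG.nonempty.some, Set.mem_univ _⟩
  · have := Fintype.ofFinite ι
    obtain ⟨x, hx, -⟩ := (gated_biInter_and_inter_nonempty hG hgated hpair Finset.univ).2 j
    exact ⟨x, by simpa using hx⟩
end

section
/- If S is a convex subgraph of a partial cube G and the Θ-class E_f either crosses S or is disjoint from S, then the contraction π_f(S) is a convex subgraph of π_f(G). -/
/-- The hypercube graph on `Λ → Bool`: two vertices are adjacent iff they differ
in exactly one coordinate. -/
def Qcube (Λ : Type*) : SimpleGraph (Λ → Bool) where
  Adj x y := ∃ f, x f ≠ y f ∧ ∀ g, g ≠ f → x g = y g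
  symm := by
    constructor
    rintro x y ⟨f, hf, h⟩
    exact ⟨f, Ne.symm hf, fun g hg => (h g hg).symm⟩
  loopless := by
    constructor
    rintro x ⟨f, hf, _⟩
    exact hf rfl

variable {Λ : Type*}

/-- The graph induced by the hypercube on a set `V` of vertices. -/
def pcGraph (V : Set (Λ → Bool)) : SimpleGraph V := (Qcube Λ).induce V

/-- `V` determines a partial cube: the induced graph is connected and its
graph distance coincides with the Hamming distance. -/
def IsPartialCube (V : Set (Λ → Bool)) : Prop :=
  (pcGraph V).Connected ∧
    ∀ x y : V, (pcGraph V).dist x y = Set.ncard {f | (x : Λ → Bool) f ≠ (y : Λ → Bool) f}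

/-- `W` is a convex subgraph of the partial cube on `V`. -/
def ConvexIn (V W : Set (Λ → Bool)) : Prop :=
  W ⊆ V ∧ ∀ u v w : V, (u : Λ → Bool) ∈ W → (v : Λ → Bool) ∈ W →
    (pcGraph V).dist u w + (pcGraph V).dist w v = (pcGraph V).dist u v →
      (w : Λ → Bool) ∈ W

/-- `W` is a gated subgraph of the partial cube on `V`: every vertex has a gate in `W`. -/
def GatedIn (V W : Set (Λ → Bool)) : Prop :=
  W ⊆ V ∧ ∀ x : V, ∃ g : V, (g : Λ → Bool) ∈ W ∧
    ∀ y : V, (y : Λ → Bool) ∈ W →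
      (pcGraph V).dist x y = (pcGraph V).dist x g + (pcGraph V).dist g y

/-- The convex hull of a set `A` inside the partial cube on `V`. -/
def convexHullIn (V A : Set (Λ → Bool)) : Set (Λ → Bool) :=
  ⋂₀ {W | ConvexIn V W ∧ A ⊆ W}

/-- The gated hull of a set `A` inside the partial cube on `V`. -/
def gatedHullIn (V A : Set (Λ → Bool)) : Set (Λ → Bool) :=
  ⋂₀ {W | GatedIn V W ∧ A ⊆ W}

/-- The interval between `u` and `v` in the partial cube on `V`. -/
def intervalIn (V : Set (Λ → Bool)) (u v : V) : Set V :=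
  {w | (pcGraph V).dist u w + (pcGraph V).dist w v = (pcGraph V).dist u v}

/-- Contraction of the Θ-class of coordinate `f`: delete coordinate `f`. -/
def contr (f : Λ) (x : Λ → Bool) : {g : Λ // g ≠ f} → Bool := fun g => x g.1

/-- Contraction of a whole set of coordinates `B`. -/
def proj (B : Set Λ) (x : Λ → Bool) : {g : Λ // g ∉ B} → Bool := fun g => x g.1

/-- The Θ-class `E_f` crosses `S`: `S` meets both halfspaces of coordinate `f`. -/
def Crosses (f : Λ) (S : Set (Λ → Bool)) : Prop :=
  (∃ x ∈ S, x f = true) ∧ (∃ x ∈ S, x f = false)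

/-- The Θ-class `E_f` (of edges of the graph on `V`) is disjoint from `S`:
no edge in class `f` has an endpoint in `S`. -/
def DisjointFrom (f : Λ) (V S : Set (Λ → Bool)) : Prop :=
  ∀ x ∈ V, ∀ y ∈ V, (Qcube Λ).Adj x y → x f ≠ y f → x ∉ S ∧ y ∉ S

/-- The Cartesian product of the cycles/edges `ZMod (F i)`. -/
def edgeCycleProd {m : ℕ} (F : Fin m → ℕ) : SimpleGraph (∀ i, ZMod (F i)) where
  Adj x y := ∃ i, cycleAdj (F i) (x i) (y i) ∧ ∀ j, j ≠ i → x j = y j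
  symm := by
    constructor
    rintro x y ⟨i, ⟨h1, h2⟩, h3⟩
    exact ⟨i, ⟨Ne.symm h1, h2.symm⟩, fun j hj => (h3 j hj).symm⟩
  loopless := by
    constructor
    rintro x ⟨i, ⟨h1, _⟩, _⟩
    exact h1 rfl

/-- A graph is (isomorphic to) a Cartesian product of edges and even cycles. -/
def IsEdgeCycleProduct {α : Type*} (H : SimpleGraph α) : Prop :=
  ∃ (m : ℕ) (F : Fin m → ℕ), (∀ i, Even (F i) ∧ 2 ≤ F i) ∧
    Nonempty (H ≃g edgeCycleProd F)

/-- The vertex set of `Q₃⁻`, the 3-cube minus one vertex. -/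
def Q3minusSet : Set (Fin 3 → Bool) := {x : Fin 3 → Bool | x ≠ fun _ => true}

/-- A partial cube is hypercellular if no pc-minor of it (a contraction of a
convex subgraph, i.e. of a restriction) is isomorphic to `Q₃⁻`. -/
def Hypercellular (V : Set (Λ → Bool)) : Prop :=
  IsPartialCube V ∧ ∀ (B : Set Λ) (W : Set (Λ → Bool)), ConvexIn V W →
    IsEmpty (pcGraph (proj B '' W) ≃g pcGraph Q3minusSet)

/-- A cell of the partial cube on `V`: a convex subgraph isomorphic to a
Cartesian product of edges and even cycles. -/
def IsCellIn (V X : Set (Λ → Bool)) : Prop :=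
  ConvexIn V X ∧ IsEdgeCycleProduct (pcGraph X)

/-! In a partial cube the interval between `u` and `v` is the set of vertices that agree
coordinatewise with `u` or with `v`, and deleting the coordinate `f` from a partial cube gives
again a partial cube. So a vertex `w` whose contraction lies between those of `u, v ∈ S` agrees
with `u` or `v` at every coordinate except possibly `f`, and it is in `S` by convexity unless
`u f = v f ≠ w f`. In that case a geodesic from `u` to `w` crosses `E_f` along an edge `xy` with
`x` between `u` and `v`, so `x ∈ S`. This is impossible if `E_f` is disjoint from `S`; if `E_f`
crosses `S`, then `y` lies between `x` and a vertex of `S` on the far side of `f`, so `y ∈ S`,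
and `w` lies between `y` and `v`. -/

def diffCoords (x y : Λ → Bool) : Set Λ := {g | x g ≠ y g}

def CubeBetween (u w v : Λ → Bool) : Prop := ∀ g, w g = u g ∨ w g = v g

lemma diffCoords_subset_union (x y z : Λ → Bool) :
    diffCoords x z ⊆ diffCoords x y ∪ diffCoords y z := by
  intro g hxz
  by_contra! h
  simp_all [diffCoords]

lemma ncard_diffCoords_add_eq_iff {x y z : Λ → Bool} (hxz : (diffCoords x z).Finite)
    (hzy : (diffCoords z y).Finite) :
    (diffCoords x z).ncard + (diffCoords z y).ncard = (diffCoords x y).ncard ↔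
      CubeBetween x z y := by
  -- `diffCoords x y` is the symmetric difference of the other two sets.
  have hunion : diffCoords x z ∪ diffCoords z y =
      diffCoords x y ∪ (diffCoords x z ∩ diffCoords z y) := by
    ext g
    simp only [diffCoords, Set.mem_union, Set.mem_inter_iff, Set.mem_ofPred_eq]
    cases x g <;> cases y g <;> cases z g <;> decide
  have hdisj : Disjoint (diffCoords x y) (diffCoords x z ∩ diffCoords z y) := by
    refine Set.disjoint_left.mpr
      fun g (hxy : x g ≠ y g) ⟨(hxz : x g ≠ z g), (hzy : z g ≠ y g)⟩ => ?_
    revert hxy hxz hzy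
    cases x g <;> cases y g <;> cases z g <;> decide
  have hxy : (diffCoords x y).Finite := (hxz.union hzy).subset (diffCoords_subset_union x z y)
  have hcount := Set.ncard_union_add_ncard_inter _ _ hxz hzy
  rw [hunion, Set.ncard_union_eq hdisj hxy (hxz.inter_of_left _)] at hcount
  have hbetween : CubeBetween x z y ↔ diffCoords x z ∩ diffCoords z y = ∅ := by
    simp only [CubeBetween, Set.eq_empty_iff_forall_notMem, diffCoords, Set.mem_inter_iff,
      Set.mem_ofPred_eq]
    refine forall_congr' fun g => ?_
    cases x g <;> cases y g <;> cases z g <;> decide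
  rw [hbetween, ← Set.ncard_eq_zero (hxz.inter_of_left _)]
  omega

lemma cubeBetween_contr_iff {f : Λ} {u w v : Λ → Bool} :
    CubeBetween (contr f u) (contr f w) (contr f v) ↔
      ∀ g, g ≠ f → w g = u g ∨ w g = v g :=
  ⟨fun h g hg => h ⟨g, hg⟩, fun h g => h g.1 g.2⟩

lemma ncard_diffCoords_contr (f : Λ) (x y : Λ → Bool) :
    (diffCoords (contr f x) (contr f y)).ncard = (diffCoords x y \ {f}).ncard := by
  have hval : diffCoords (contr f x) (contr f y) = Subtype.val ⁻¹' (diffCoords x y \ {f}) := by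
    ext g
    simp [diffCoords, contr, g.2]
  rw [hval, Set.ncard_preimage_of_injective_subset_range Subtype.val_injective]
  intro g hg
  exact ⟨⟨g, hg.2⟩, rfl⟩

namespace Qcube

lemma eq_of_adj_of_ne {x y : Λ → Bool} (h : (Qcube Λ).Adj x y) {f : Λ} (hf : x f ≠ y f)
    {g : Λ} (hg : g ≠ f) : x g = y g := by
  obtain ⟨f', hf', hother⟩ := h
  obtain rfl : f = f' := by_contra fun hne => hf (hother f hne)
  exact hother g hg

lemma diffCoords_eq_singleton_of_adj {x y : Λ → Bool} (h : (Qcube Λ).Adj x y) :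
    ∃ g, diffCoords x y = {g} := by
  obtain ⟨f, hf, hother⟩ := h
  refine ⟨f, Set.eq_singleton_iff_unique_mem.mpr ⟨hf, fun g hg => ?_⟩⟩
  by_contra hne
  exact hg (hother g hne)

lemma encard_diffCoords_le_length {V : Set (Λ → Bool)} {x y : V} (p : (pcGraph V).Walk x y) :
    (diffCoords (x : Λ → Bool) y).encard ≤ p.length := by
  induction p with
  | nil => simp [diffCoords]
  | @cons a b c hab p ih =>
    have hab' : (Qcube Λ).Adj (a : Λ → Bool) b := hab
    obtain ⟨g, hg⟩ := diffCoords_eq_singleton_of_adj hab'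
    calc (diffCoords (a : Λ → Bool) c).encard
        ≤ (diffCoords (a : Λ → Bool) b ∪ diffCoords (b : Λ → Bool) c).encard :=
          Set.encard_le_encard (diffCoords_subset_union _ _ _)
      _ ≤ 1 + p.length := by
          grw [Set.encard_union_le, hg, Set.encard_singleton, ih]
      _ = (p.cons hab).length := by push_cast [SimpleGraph.Walk.length_cons]; ring

lemma adj_contr {f : Λ} {x y : Λ → Bool} (h : (Qcube Λ).Adj x y) (hf : x f = y f) :
    (Qcube _).Adj (contr f x) (contr f y) := by
  obtain ⟨g, hg, hother⟩ := h
  have hgf : g ≠ f := by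
    rintro rfl
    exact hg hf
  exact ⟨⟨g, hgf⟩, hg, fun g' hg' => hother g' fun h => hg' (Subtype.ext h)⟩

lemma contr_eq_of_adj {f : Λ} {x y : Λ → Bool} (h : (Qcube Λ).Adj x y) (hf : x f ≠ y f) :
    contr f x = contr f y :=
  funext fun g => eq_of_adj_of_ne h hf g.2

end Qcube

lemma exists_contr_walk {V : Set (Λ → Bool)} (f : Λ) {x y : V} (p : (pcGraph V).Walk x y) :
    ∃ p' : (pcGraph (contr f '' V)).Walk (V.imageFactorization (contr f) x)
        (V.imageFactorization (contr f) y),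
      p'.length ≤ p.length ∧
        ((x : Λ → Bool) f ≠ (y : Λ → Bool) f → p'.length < p.length) := by
  induction p with
  | nil => exact ⟨.nil, le_rfl, fun h => absurd rfl h⟩
  | @cons a b c hab p ih =>
    obtain ⟨p', hle, hlt⟩ := ih
    have hab' : (Qcube Λ).Adj (a : Λ → Bool) b := hab
    rw [SimpleGraph.Walk.length_cons]
    by_cases hf : (a : Λ → Bool) f = (b : Λ → Bool) f
    · have hadj : (pcGraph (contr f '' V)).Adj (V.imageFactorization (contr f) a)
          (V.imageFactorization (contr f) b) := Qcube.adj_contr hab' hf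
      refine ⟨p'.cons hadj, by simpa using hle, fun hac => ?_⟩
      simpa using hlt (hf ▸ hac)
    · have heq : V.imageFactorization (contr f) a = V.imageFactorization (contr f) b :=
        Subtype.ext (Qcube.contr_eq_of_adj hab' hf)
      exact ⟨p'.copy heq.symm rfl, by simp; omega, fun _ => by simp; omega⟩

lemma Crosses.exists_ne {f : Λ} {S : Set (Λ → Bool)} (h : Crosses f S) (b : Bool) :
    ∃ q ∈ S, q f ≠ b := by
  obtain ⟨⟨s, hs, hsf⟩, t, ht, htf⟩ := h
  cases b
  · exact ⟨s, hs, by simp [hsf]⟩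
  · exact ⟨t, ht, by simp [htf]⟩

namespace IsPartialCube

variable {V : Set (Λ → Bool)} (hV : IsPartialCube V)
include hV

lemma dist_eq_ncard (x y : V) :
    (pcGraph V).dist x y = (diffCoords (x : Λ → Bool) y).ncard :=
  hV.2 x y

lemma finite_diffCoords (x y : V) : (diffCoords (x : Λ → Bool) y).Finite := by
  obtain ⟨p⟩ := hV.1.preconnected x y
  exact Set.finite_of_encard_le_coe (Qcube.encard_diffCoords_le_length p)

lemma dist_add_dist_eq_iff (x y z : V) :
    (pcGraph V).dist x z + (pcGraph V).dist z y = (pcGraph V).dist x y ↔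
      CubeBetween (x : Λ → Bool) z y := by
  rw [hV.dist_eq_ncard, hV.dist_eq_ncard, hV.dist_eq_ncard]
  exact ncard_diffCoords_add_eq_iff (hV.finite_diffCoords x z) (hV.finite_diffCoords z y)

lemma convexIn_iff (S : Set (Λ → Bool)) :
    ConvexIn V S ↔ S ⊆ V ∧
      ∀ u v w : V, (u : Λ → Bool) ∈ S → (v : Λ → Bool) ∈ S →
        CubeBetween (u : Λ → Bool) w v → (w : Λ → Bool) ∈ S := by
  simp only [ConvexIn, hV.dist_add_dist_eq_iff]

lemma exists_adj_between {x y : V} (hne : x ≠ y) :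
    ∃ z : V, (pcGraph V).Adj x z ∧ CubeBetween (x : Λ → Bool) z y := by
  obtain ⟨p, hp⟩ := hV.1.exists_walk_length_eq_dist x y
  cases p with
  | nil => exact absurd rfl hne
  | @cons _ z _ hxz q =>
    refine ⟨z, hxz, (hV.dist_add_dist_eq_iff x y z).mp (le_antisymm ?_ hV.1.dist_triangle)⟩
    have := SimpleGraph.dist_le q
    rw [SimpleGraph.dist_eq_one_iff_adj.mpr hxz, ← hp, SimpleGraph.Walk.length_cons]
    omega

lemma exists_flip_edge (f : Λ) (x w : V) (hxw : (x : Λ → Bool) f ≠ (w : Λ → Bool) f) :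
    ∃ p q : V, CubeBetween (x : Λ → Bool) p w ∧ (p : Λ → Bool) f = (x : Λ → Bool) f ∧
      (Qcube Λ).Adj (p : Λ → Bool) q ∧ (p : Λ → Bool) f ≠ (q : Λ → Bool) f := by
  induction hn : (pcGraph V).dist x w using Nat.strong_induction_on generalizing x with
  | _ n ih =>
    have hne : x ≠ w := by
      rintro rfl
      exact hxw rfl
    obtain ⟨z, hxz, hbtw⟩ := hV.exists_adj_between hne
    by_cases hzf : (z : Λ → Bool) f = (x : Λ → Bool) f
    · have hzw : (z : Λ → Bool) f ≠ (w : Λ → Bool) f := hzf ▸ hxw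
      have hlt : (pcGraph V).dist z w < n := by
        have := (hV.dist_add_dist_eq_iff x w z).mpr hbtw
        rw [SimpleGraph.dist_eq_one_iff_adj.mpr hxz] at this
        omega
      obtain ⟨p, q, hzpw, hpf, hpq, hpqf⟩ := ih _ hlt z hzw rfl
      refine ⟨p, q, fun g => ?_, hpf.trans hzf, hpq, hpqf⟩
      rcases hzpw g with h | h <;> rcases hbtw g with h' | h' <;>
        simp only [h, h', true_or, or_true]
    · exact ⟨x, z, fun g => .inl rfl, rfl, hxz, Ne.symm hzf⟩

lemma image_contr (f : Λ) : IsPartialCube (contr f '' V) := by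
  have hsurj := V.imageFactorization_surjective (f := contr f)
  have hreach : (pcGraph (contr f '' V)).Preconnected := by
    intro x' y'
    obtain ⟨x, rfl⟩ := hsurj x'
    obtain ⟨y, rfl⟩ := hsurj y'
    obtain ⟨p⟩ := hV.1.preconnected x y
    obtain ⟨p', -⟩ := exists_contr_walk f p
    exact p'.reachable
  refine ⟨{ preconnected := hreach, nonempty := hV.1.nonempty.map (V.imageFactorization _) },
    fun x' y' => ?_⟩
  obtain ⟨x, rfl⟩ := hsurj x'
  obtain ⟨y, rfl⟩ := hsurj y'
  refine le_antisymm ?_ ?_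
  · obtain ⟨p, hp⟩ := hV.1.exists_walk_length_eq_dist x y
    obtain ⟨p', hle, hlt⟩ := exists_contr_walk f p
    refine (SimpleGraph.dist_le p').trans ?_
    change p'.length ≤ (diffCoords (contr f x) (contr f y)).ncard
    rw [hp, hV.dist_eq_ncard] at hle hlt
    rw [ncard_diffCoords_contr]
    by_cases hf : f ∈ diffCoords (x : Λ → Bool) y
    · have := Set.ncard_sdiff_singleton_add_one hf (hV.finite_diffCoords x y)
      have := hlt hf
      omega
    · rwa [Set.sdiff_singleton_eq_self hf]
  · obtain ⟨q, hq⟩ := (hreach _ _).exists_walk_length_eq_dist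
    rw [← hq]
    exact (Set.encard_le_coe_iff_finite_ncard_le.mp (Qcube.encard_diffCoords_le_length q)).2

lemma mem_of_between_off {S : Set (Λ → Bool)} (hS : ConvexIn V S) {f : Λ}
    (hf : Crosses f S ∨ DisjointFrom f V S) (u v w : V) (hu : (u : Λ → Bool) ∈ S)
    (hv : (v : Λ → Bool) ∈ S)
    (hbtw : ∀ g, g ≠ f → (w : Λ → Bool) g = (u : Λ → Bool) g ∨
      (w : Λ → Bool) g = (v : Λ → Bool) g) :
    (w : Λ → Bool) ∈ S := by
  obtain ⟨hSV, hconv⟩ := (hV.convexIn_iff S).mp hS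
  by_cases hwf :
      (w : Λ → Bool) f = (u : Λ → Bool) f ∨ (w : Λ → Bool) f = (v : Λ → Bool) f
  · refine hconv u v w hu hv fun g => ?_
    by_cases hg : g = f
    · exact hg ▸ hwf
    · exact hbtw g hg
  have hwu : (w : Λ → Bool) f ≠ (u : Λ → Bool) f := (not_or.mp hwf).1
  obtain ⟨x, y, hux, hxf, hxy, hxyf⟩ := hV.exists_flip_edge f u w (Ne.symm hwu)
  have hxS : (x : Λ → Bool) ∈ S := by
    refine hconv u v x hu hv fun g => ?_
    by_cases hg : g = f
    · exact .inl (hg ▸ hxf)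
    · rcases hux g with h | h
      · exact .inl h
      · rw [h]
        exact hbtw g hg
  rcases hf with hcross | hdisj
  · obtain ⟨q, hq, hqf⟩ := hcross.exists_ne ((u : Λ → Bool) f)
    have hyf : (y : Λ → Bool) f ≠ (u : Λ → Bool) f := hxf ▸ hxyf.symm
    have hyS : (y : Λ → Bool) ∈ S := by
      refine hconv x ⟨q, hSV hq⟩ y hxS hq fun g => ?_
      by_cases hg : g = f
      · subst hg
        exact .inr ((Bool.eq_not_of_ne hyf).trans (Bool.eq_not_of_ne hqf).symm)
      · exact .inl (Qcube.eq_of_adj_of_ne hxy hxyf hg).symm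
    refine hconv y v w hyS hv fun g => ?_
    by_cases hg : g = f
    · subst hg
      exact .inl ((Bool.eq_not_of_ne hwu).trans (Bool.eq_not_of_ne hyf).symm)
    · rw [← Qcube.eq_of_adj_of_ne hxy hxyf hg]
      rcases hbtw g hg with h | h
      · rcases hux g with h' | h' <;> simp only [h, h', true_or]
      · exact .inr h
  · exact absurd hxS (hdisj x x.2 y y.2 hxy hxyf).1

end IsPartialCube

/-- If `S` is convex in the partial cube on `V` and the Θ-class `E_f` crosses `S`
or is disjoint from `S`, then `π_f(S)` is convex in `π_f(G)`. -/
theorem stmt9 (V S : Set (Λ → Bool)) (hV : IsPartialCube V) (hS : ConvexIn V S)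
    (f : Λ) (h : Crosses f S ∨ DisjointFrom f V S) :
    ConvexIn (contr f '' V) (contr f '' S) := by
  rw [(hV.image_contr f).convexIn_iff]
  refine ⟨Set.image_mono hS.1, fun u' v' w' ⟨u, hu, hu'⟩ ⟨v, hv, hv'⟩ hbtw => ?_⟩
  obtain ⟨w, rfl⟩ := V.imageFactorization_surjective w'
  rw [← hu', ← hv'] at hbtw
  exact ⟨w, hV.mem_of_between_off hS h ⟨u, hS.1 hu⟩ ⟨v, hS.1 hv⟩ w hu hv
    (cubeBetween_contr_iff.mp hbtw), rfl⟩
end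

section
/- For a subset S of vertices of a partial cube G and a coordinate f, the contraction of the convex hull of S is contained in the convex hull of the contraction: π_f(conv(S)) ⊆ conv(π_f(S)); moreover if E_f crosses S then equality holds. -/
variable {Λ : Type*}

/-!
Metric betweenness in a partial cube is coordinatewise betweenness, and deleting a coordinate
keeps a partial cube a partial cube. Hence `π_f`-preimages of convex sets are convex, which gives
the inclusion. For equality, note that a convex set `H` contains every vertex `c` that no
halfspace separates from `H`: walking from a point of `H` along a geodesic to `c`, each step
sets one coordinate to its value in `c` and so stays between two points of `H`. If `E_f` crosses
`H`, any vertex lying over a vertex between two points of `π_f(H)` is of this kind, so `π_f(H)`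
is convex.
-/

section

open SimpleGraph

variable {V : Set (Λ → Bool)}

lemma pcGraph_adj_iff {x y : V} :
    (pcGraph V).Adj x y ↔ ∃ f, x.1 f ≠ y.1 f ∧ ∀ g, g ≠ f → x.1 g = y.1 g :=
  Iff.rfl

lemma exists_finset_setOf_ne_subset {x y : V} (p : (pcGraph V).Walk x y) :
    ∃ s : Finset Λ, {g | x.1 g ≠ y.1 g} ⊆ s ∧ s.card ≤ p.length := by
  classical
  induction p with
  | nil => exact ⟨∅, fun g hg => absurd rfl hg, le_rfl⟩
  | cons h _ ih =>
    obtain ⟨g₀, -, hrest⟩ := pcGraph_adj_iff.1 h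
    obtain ⟨s, hs, hcard⟩ := ih
    refine ⟨insert g₀ s, fun g hg => ?_, ?_⟩
    · by_cases hg₀ : g = g₀
      · simp [hg₀]
      · exact Finset.mem_insert_of_mem (hs (by rwa [Set.mem_ofPred_eq, ← hrest g hg₀]))
    · rw [Walk.length_cons]
      exact (Finset.card_insert_le _ _).trans (by omega)

lemma finite_setOf_ne_of_reachable {x y : V} (h : (pcGraph V).Reachable x y) :
    {g | x.1 g ≠ y.1 g}.Finite :=
  let ⟨p⟩ := h
  let ⟨s, hs, _⟩ := exists_finset_setOf_ne_subset p
  s.finite_toSet.subset hs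

lemma ncard_setOf_ne_le_length {x y : V} (p : (pcGraph V).Walk x y) :
    {g | x.1 g ≠ y.1 g}.ncard ≤ p.length :=
  let ⟨s, hs, hcard⟩ := exists_finset_setOf_ne_subset p
  (Set.ncard_le_ncard hs s.finite_toSet).trans ((Set.ncard_coe_finset s).trans_le hcard)

lemma ncard_setOf_ne_le_dist {x y : V} (h : (pcGraph V).Reachable x y) :
    {g | x.1 g ≠ y.1 g}.ncard ≤ (pcGraph V).dist x y :=
  let ⟨p, hp⟩ := h.exists_walk_length_eq_dist
  hp ▸ ncard_setOf_ne_le_length p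

lemma IsPartialCube.of_dist_le (hc : (pcGraph V).Connected)
    (h : ∀ x y : V, (pcGraph V).dist x y ≤ {g | x.1 g ≠ y.1 g}.ncard) : IsPartialCube V :=
  ⟨hc, fun x y => (h x y).antisymm (ncard_setOf_ne_le_dist (hc x y))⟩

lemma IsPartialCube.dist_add_dist_eq_iff_s10 (hV : IsPartialCube V) (u w v : V) :
    (pcGraph V).dist u w + (pcGraph V).dist w v = (pcGraph V).dist u v ↔
      ∀ g, w.1 g = u.1 g ∨ w.1 g = v.1 g := by
  rw [hV.2, hV.2, hV.2]
  set A := {g | u.1 g ≠ w.1 g}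
  set B := {g | w.1 g ≠ v.1 g}
  have hA : A.Finite := finite_setOf_ne_of_reachable (hV.1 u w)
  have hB : B.Finite := finite_setOf_ne_of_reachable (hV.1 w v)
  have hAB : {g | u.1 g ≠ v.1 g} = (A ∪ B) \ (A ∩ B) := by
    ext g
    simp only [A, B, Set.mem_ofPred_eq, Set.mem_sdiff, Set.mem_union, Set.mem_inter_iff]
    cases u.1 g <;> cases w.1 g <;> cases v.1 g <;> decide
  have hle : (A ∩ B).ncard ≤ (A ∪ B).ncard :=
    Set.ncard_le_ncard (Set.inter_subset_left.trans Set.subset_union_left) (hA.union hB)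
  rw [hAB, Set.ncard_sdiff' (Set.inter_subset_left.trans Set.subset_union_left) (hA.union hB),
    ← Set.ncard_union_add_ncard_inter A B hA hB]
  have hempty : (A ∩ B).ncard = 0 ↔ ∀ g, w.1 g = u.1 g ∨ w.1 g = v.1 g := by
    rw [Set.ncard_eq_zero (hA.inter_of_left B), Set.eq_empty_iff_forall_notMem]
    refine forall_congr' fun g => ?_
    simp only [A, B, Set.mem_inter_iff, Set.mem_ofPred_eq]
    cases u.1 g <;> cases w.1 g <;> cases v.1 g <;> decide
  rw [← hempty]
  omega

lemma ncard_setOf_ne_eq_ncard_contr_add (f : Λ) {x y : Λ → Bool}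
    (h : {g | x g ≠ y g}.Finite) :
    {g | x g ≠ y g}.ncard =
      {g | contr f x g ≠ contr f y g}.ncard + if x f = y f then 0 else 1 := by
  have hsub := Set.ncard_subtype (· ≠ f) {g | x g ≠ y g}
  change {g : {g // g ≠ f} | contr f x g ≠ contr f y g}.ncard = _ at hsub
  rw [hsub]
  split_ifs with hf
  · have hinter : {g | x g ≠ y g} ∩ {g | g ≠ f} = {g | x g ≠ y g} :=
      Set.inter_eq_left.2 fun g (hg : x g ≠ y g) (hgf : g = f) => hg (hgf ▸ hf)
    rw [hinter, add_zero]
  · rw [← Set.ncard_sdiff_singleton_add_one hf h]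
    rfl

lemma exists_walk_contr (f : Λ) {x y : V} (p : (pcGraph V).Walk x y) :
    ∃ q : (pcGraph (contr f '' V)).Walk (Set.imageFactorization (contr f) V x)
        (Set.imageFactorization (contr f) V y),
      q.length + (if x.1 f = y.1 f then 0 else 1) ≤ p.length := by
  induction p with
  | nil => exact ⟨Walk.nil, by simp⟩
  | @cons u v w hadj p ih =>
    obtain ⟨g₀, hg₀, hrest⟩ := pcGraph_adj_iff.1 hadj
    obtain ⟨q, hq⟩ := ih
    rw [Walk.length_cons]
    by_cases hg₀f : g₀ = f
    · subst hg₀f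
      have huv :
          Set.imageFactorization (contr g₀) V u = Set.imageFactorization (contr g₀) V v :=
        Subtype.ext (funext fun g => hrest g.1 g.2)
      refine ⟨q.copy huv.symm rfl, ?_⟩
      rw [Walk.length_copy]
      split_ifs at hq ⊢ <;> grind
    · have hadj' : (pcGraph (contr f '' V)).Adj (Set.imageFactorization (contr f) V u)
          (Set.imageFactorization (contr f) V v) :=
        ⟨⟨g₀, hg₀f⟩, hg₀, fun g hg => hrest g.1 fun e => hg (Subtype.ext e)⟩
      refine ⟨Walk.cons hadj' q, ?_⟩
      rw [Walk.length_cons, hrest f fun e => hg₀f e.symm]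
      omega

lemma IsPartialCube.image_contr_s10 (hV : IsPartialCube V) (f : Λ) :
    IsPartialCube (contr f '' V) := by
  have hsurj := Set.imageFactorization_surjective (f := contr f) (s := V)
  have hconn : (pcGraph (contr f '' V)).Connected := by
    have : Nonempty (contr f '' V) := hV.1.nonempty.map (Set.imageFactorization _ _)
    refine ⟨fun a b => ?_⟩
    obtain ⟨x, rfl⟩ := hsurj a
    obtain ⟨y, rfl⟩ := hsurj b
    exact (hV.1 x y).elim fun p => ⟨(exists_walk_contr f p).choose⟩
  refine .of_dist_le hconn fun a b => ?_
  obtain ⟨x, rfl⟩ := hsurj a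
  obtain ⟨y, rfl⟩ := hsurj b
  obtain ⟨p, hp⟩ := hV.1.exists_walk_length_eq_dist x y
  obtain ⟨q, hq⟩ := exists_walk_contr f p
  have hcard := ncard_setOf_ne_eq_ncard_contr_add f (finite_setOf_ne_of_reachable (hV.1 x y))
  rw [← hV.2, ← hp] at hcard
  exact (dist_le q).trans (by
    change q.length ≤ {g | contr f x.1 g ≠ contr f y.1 g}.ncard
    omega)

lemma ConvexIn.mem_of_between (hV : IsPartialCube V) {H : Set (Λ → Bool)} (hH : ConvexIn V H)
    {u v w : V} (hu : u.1 ∈ H) (hv : v.1 ∈ H) (hw : ∀ g, w.1 g = u.1 g ∨ w.1 g = v.1 g) :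
    w.1 ∈ H :=
  hH.2 u v w hu hv ((hV.dist_add_dist_eq_iff_s10 u w v).2 hw)

lemma ConvexIn.mem_of_forall_exists_eq (hV : IsPartialCube V) {H : Set (Λ → Bool)}
    (hH : ConvexIn V H) (hne : H.Nonempty) (c : V) (hc : ∀ g, ∃ w ∈ H, w g = c.1 g) :
    c.1 ∈ H := by
  obtain ⟨a₀, ha₀⟩ := hne
  lift a₀ to V using hH.1 ha₀
  induction hd : (pcGraph V).dist a₀ c generalizing a₀ with
  | zero => rwa [← hV.1.dist_eq_zero_iff.1 hd]
  | succ n ih =>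
    obtain ⟨p, hp⟩ := hV.1.exists_walk_length_eq_dist a₀ c
    cases p with
    | nil => simp at hd
    | @cons _ z _ hadj q =>
      have haz : (pcGraph V).dist a₀ z = 1 := dist_eq_one_iff_adj.2 hadj
      have hzc : (pcGraph V).dist z c ≤ n :=
        (dist_le q).trans (by rw [Walk.length_cons] at hp; omega)
      have htri := hV.1.dist_triangle (u := a₀) (v := z) (w := c)
      have hbtw := (hV.dist_add_dist_eq_iff_s10 a₀ z c).1 (by omega)
      obtain ⟨g₀, hg₀, hrest⟩ := pcGraph_adj_iff.1 hadj
      obtain ⟨w, hwH, hwg₀⟩ := hc g₀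
      have hzg₀ : z.1 g₀ = w g₀ := hwg₀ ▸ (hbtw g₀).resolve_left (Ne.symm hg₀)
      have hzH : z.1 ∈ H := by
        refine hH.mem_of_between hV ha₀ hwH (v := ⟨w, hH.1 hwH⟩) fun g => ?_
        by_cases hg : g = g₀
        · exact Or.inr (hg ▸ hzg₀)
        · exact Or.inl (hrest g hg).symm
      exact ih z hzH (by omega)

lemma ConvexIn.preimage_contr (hV : IsPartialCube V) (f : Λ) {W : Set ({g // g ≠ f} → Bool)}
    (hW : ConvexIn (contr f '' V) W) : ConvexIn V (V ∩ contr f ⁻¹' W) := by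
  refine ⟨Set.inter_subset_left, fun u v w hu hv hd => ⟨w.2, ?_⟩⟩
  have hbtw := (hV.dist_add_dist_eq_iff_s10 u w v).1 hd
  exact hW.mem_of_between (hV.image_contr_s10 f) (u := Set.imageFactorization _ _ u)
    (v := Set.imageFactorization _ _ v) (w := Set.imageFactorization _ _ w) hu.2 hv.2
    fun g => hbtw g.1

lemma Crosses.mono {f : Λ} {S T : Set (Λ → Bool)} (h : Crosses f S) (hST : S ⊆ T) :
    Crosses f T :=
  ⟨h.1.imp fun _ hx => ⟨hST hx.1, hx.2⟩, h.2.imp fun _ hx => ⟨hST hx.1, hx.2⟩⟩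

lemma ConvexIn.image_contr_s10 (hV : IsPartialCube V) {f : Λ} {H : Set (Λ → Bool)}
    (hH : ConvexIn V H) (hcross : Crosses f H) : ConvexIn (contr f '' V) (contr f '' H) := by
  refine ⟨Set.image_mono hH.1, fun u v w hu hv hd => ?_⟩
  obtain ⟨a, haH, hau⟩ := hu
  obtain ⟨b, hbH, hbv⟩ := hv
  obtain ⟨c, rfl⟩ := Set.imageFactorization_surjective w
  have hbtw := ((hV.image_contr_s10 f).dist_add_dist_eq_iff_s10 u _ v).1 hd
  refine ⟨c.1, hH.mem_of_forall_exists_eq hV ⟨a, haH⟩ c fun g => ?_, rfl⟩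
  by_cases hg : g = f
  · obtain ⟨⟨s, hs, hsf⟩, ⟨t, ht, htf⟩⟩ := hcross
    subst hg
    cases c.1 g
    · exact ⟨t, ht, htf⟩
    · exact ⟨s, hs, hsf⟩
  · rcases hbtw ⟨g, hg⟩ with h | h
    · exact ⟨a, haH, (congrFun hau ⟨g, hg⟩).trans h.symm⟩
    · exact ⟨b, hbH, (congrFun hbv ⟨g, hg⟩).trans h.symm⟩

lemma subset_convexHullIn (V A : Set (Λ → Bool)) : A ⊆ convexHullIn V A :=
  Set.subset_sInter fun _ hW => hW.2

lemma convexHullIn_subset {A W : Set (Λ → Bool)} (hW : ConvexIn V W) (hAW : A ⊆ W) :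
    convexHullIn V A ⊆ W :=
  Set.sInter_subset_of_mem ⟨hW, hAW⟩

lemma convexIn_convexHullIn {A : Set (Λ → Bool)} (hA : A ⊆ V) :
    ConvexIn V (convexHullIn V A) :=
  ⟨convexHullIn_subset ⟨subset_rfl, fun _ _ w _ _ _ => w.2⟩ hA,
    fun u v w hu hv hd => Set.mem_sInter.2 fun W hW =>
      hW.1.2 u v w (Set.mem_sInter.1 hu W hW) (Set.mem_sInter.1 hv W hW) hd⟩

end

/-- `π_f(conv(S)) ⊆ conv(π_f(S))`; if moreover `E_f` crosses `S`, equality holds. -/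
theorem stmt10 (V S : Set (Λ → Bool)) (hV : IsPartialCube V) (hS : S ⊆ V) (f : Λ) :
    contr f '' convexHullIn V S ⊆ convexHullIn (contr f '' V) (contr f '' S) ∧
    (Crosses f S →
      contr f '' convexHullIn V S = convexHullIn (contr f '' V) (contr f '' S)) := by
  have hsub : contr f '' convexHullIn V S ⊆ convexHullIn (contr f '' V) (contr f '' S) := by
    have hconv := (convexIn_convexHullIn (Set.image_mono hS)).preimage_contr hV f
    refine Set.image_subset_iff.2 ((convexHullIn_subset hconv fun x hx => ?_).trans
      Set.inter_subset_right)
    exact ⟨hS hx, subset_convexHullIn _ _ (Set.mem_image_of_mem _ hx)⟩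
  refine ⟨hsub, fun hcross => hsub.antisymm (convexHullIn_subset ?_
    (Set.image_mono (subset_convexHullIn V S)))⟩
  exact (convexIn_convexHullIn hS).image_contr_s10 hV (hcross.mono (subset_convexHullIn V S))
end

section
/- If a partial cube G is a gated amalgam of two partial cubes G1 and G2 each of which excludes Q3⁻ (the 3-cube minus a vertex) as a pc-minor, then G also excludes Q3⁻ as a pc-minor. -/
variable {Λ : Type*}

/-!
Suppose the contraction `proj B '' W` of a convex set `W ⊆ V` is isomorphic to `Q₃⁻`. If `W`
misses one of the two pieces, it lies in the other. Otherwise the gate in `Vᵢ` of a vertex of `W`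
lies in `W`, coordinatewise between that vertex and all of `W ∩ Vᵢ`; coordinatewise betweenness
survives contraction, and both contractions of convex sets and `Q₃⁻` carry the Hamming
distance, so the images of `W ∩ V₁` and `W ∩ V₂` are gated sets covering `Q₃⁻`. A proper gated
subset of `Q₃⁻` lies in a halfspace `xᵢ = 0`, and two such halfspaces never cover `Q₃⁻`. Hence
`Q₃⁻` is already the contraction of `W ∩ Vᵢ`, which is convex in `Vᵢ`.
-/

namespace SimpleGraph

variable {α β : Type*} {G : SimpleGraph α} {H : SimpleGraph β}

lemma Hom.dist_le (f : G →g H) {u v : α} (h : G.Reachable u v) :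
    H.dist (f u) (f v) ≤ G.dist u v := by
  obtain ⟨w, hw⟩ := h.exists_walk_length_eq_dist
  exact hw ▸ (w.length_map f) ▸ SimpleGraph.dist_le (w.map f)

lemma Iso.dist_eq (e : G ≃g H) (u v : α) : H.dist (e u) (e v) = G.dist u v := by
  by_cases h : G.Reachable u v
  · refine le_antisymm (Hom.dist_le e.toHom h) ?_
    simpa using Hom.dist_le e.symm.toHom (h.map e.toHom)
  · have h' : ¬H.Reachable (e u) (e v) := fun h' => h (by simpa using h'.map e.symm.toHom)
    rw [dist_eq_zero_of_not_reachable h, dist_eq_zero_of_not_reachable h']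

lemma Reachable.exists_adj_dist_add_one {u v : α} (h : G.Reachable u v) (hne : u ≠ v) :
    ∃ w, G.Adj u w ∧ G.dist w v + 1 = G.dist u v := by
  obtain ⟨p, hp⟩ := h.exists_walk_length_eq_dist
  cases p with
  | nil => exact absurd rfl hne
  | cons hadj q =>
    refine ⟨_, hadj, le_antisymm ?_ ?_⟩
    · rw [← hp, Walk.length_cons]
      exact Nat.succ_le_succ (dist_le q)
    · have := hadj.reachable.dist_triangle_left v
      rwa [dist_eq_one_iff_adj.mpr hadj, add_comm] at this

def IsGatedSet (G : SimpleGraph α) (S : Set α) : Prop :=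
  ∀ x, ∃ g ∈ S, ∀ y ∈ S, G.dist x g + G.dist g y = G.dist x y

lemma IsGatedSet.image_iso {S : Set α} (hS : G.IsGatedSet S) (e : G ≃g H) :
    H.IsGatedSet (e '' S) := by
  intro x
  obtain ⟨g, hg, hgate⟩ := hS (e.symm x)
  refine ⟨e g, Set.mem_image_of_mem e hg, ?_⟩
  rintro _ ⟨y, hy, rfl⟩
  simpa only [← e.dist_eq, e.apply_symm_apply] using hgate y hy

end SimpleGraph

def diffSet (x y : Λ → Bool) : Set Λ := {f | x f ≠ y f}

def HammingBtw (x y z : Λ → Bool) : Prop := ∀ f, y f = x f ∨ y f = z f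

section Hamming

variable {x y z : Λ → Bool}

lemma diffSet_eq_empty_iff : diffSet x y = ∅ ↔ x = y := by
  simp [diffSet, Set.eq_empty_iff_forall_notMem, funext_iff]

lemma diffSet_eq_symmDiff (x y z : Λ → Bool) :
    diffSet x z = symmDiff (diffSet x y) (diffSet y z) := by
  ext f
  simp only [diffSet, Set.mem_symmDiff, Set.mem_ofPred_eq]
  cases x f <;> cases y f <;> cases z f <;> simp

lemma hammingBtw_iff_disjoint : HammingBtw x y z ↔ Disjoint (diffSet x y) (diffSet y z) := by
  simp only [HammingBtw, Set.disjoint_left, diffSet, Set.mem_ofPred_eq]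
  refine forall_congr' fun f => ?_
  cases x f <;> cases y f <;> cases z f <;> simp

lemma ncard_diffSet_add_eq_iff (hxy : (diffSet x y).Finite) (hyz : (diffSet y z).Finite) :
    (diffSet x y).ncard + (diffSet y z).ncard = (diffSet x z).ncard ↔ HammingBtw x y z := by
  have hunion := Set.ncard_union_add_ncard_inter _ _ hxy hyz
  have hsymm : (diffSet x z).ncard = (diffSet x y ∪ diffSet y z).ncard -
      (diffSet x y ∩ diffSet y z).ncard := by
    rw [diffSet_eq_symmDiff x y z, symmDiff_eq_sup_sdiff_inf]
    exact Set.ncard_sdiff inf_le_sup (hxy.inter_of_left _)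
  rw [hammingBtw_iff_disjoint, Set.disjoint_iff_inter_eq_empty,
    ← Set.ncard_eq_zero (hxy.inter_of_left _)]
  omega

lemma qcube_adj_iff : (Qcube Λ).Adj x y ↔ ∃ f, diffSet x y = {f} := by
  simp only [Qcube, Set.eq_singleton_iff_unique_mem, diffSet, Set.mem_ofPred_eq]
  refine exists_congr fun f => and_congr_right fun _ => forall_congr' fun g => ?_
  exact not_imp_comm

lemma SimpleGraph.Walk.ncard_diffSet_le_length (w : (Qcube Λ).Walk x y) :
    (diffSet x y).Finite ∧ (diffSet x y).ncard ≤ w.length := by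
  induction w with
  | nil => simp [diffSet_eq_empty_iff.mpr rfl]
  | @cons x y z hxy _ ih =>
    obtain ⟨f, hf⟩ := qcube_adj_iff.mp hxy
    have hsub : diffSet x z ⊆ {f} ∪ diffSet y z :=
      hf ▸ diffSet_eq_symmDiff x y z ▸ symmDiff_le_sup
    refine ⟨((Set.finite_singleton f).union ih.1).subset hsub, ?_⟩
    calc (diffSet x z).ncard ≤ ({f} ∪ diffSet y z).ncard :=
          Set.ncard_le_ncard hsub ((Set.finite_singleton f).union ih.1)
      _ ≤ 1 + (diffSet y z).ncard := by
          simpa using Set.ncard_union_le {f} (diffSet y z)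
      _ ≤ _ := by rw [SimpleGraph.Walk.length_cons]; omega

end Hamming

lemma pcGraph_adj_iff_s15 {U : Set (Λ → Bool)} {x y : U} :
    (pcGraph U).Adj x y ↔ (Qcube Λ).Adj x y := Iff.rfl

lemma ncard_diffSet_le_dist {U : Set (Λ → Bool)} {x y : U} (h : (pcGraph U).Reachable x y) :
    (diffSet (x : Λ → Bool) y).Finite ∧
      (diffSet (x : Λ → Bool) y).ncard ≤ (pcGraph U).dist x y := by
  obtain ⟨w, hw⟩ := h.exists_walk_length_eq_dist
  let e : pcGraph U →g Qcube Λ := (SimpleGraph.Embedding.induce U).toHom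
  rw [← hw, ← w.length_map e]
  exact (w.map e).ncard_diffSet_le_length

def IsHammingIsometric (U : Set (Λ → Bool)) : Prop :=
  ∀ x y : U, (diffSet (x : Λ → Bool) y).Finite ∧
    (pcGraph U).dist x y = (diffSet (x : Λ → Bool) y).ncard

lemma IsPartialCube.isHammingIsometric {V : Set (Λ → Bool)} (hV : IsPartialCube V) :
    IsHammingIsometric V :=
  fun x y => ⟨(ncard_diffSet_le_dist (hV.1 x y)).1, hV.2 x y⟩

lemma IsHammingIsometric.dist_add_dist_eq_iff {U : Set (Λ → Bool)} (hU : IsHammingIsometric U)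
    (x y z : U) :
    (pcGraph U).dist x y + (pcGraph U).dist y z = (pcGraph U).dist x z ↔
      HammingBtw (x : Λ → Bool) y z := by
  rw [(hU x y).2, (hU y z).2, (hU x z).2]
  exact ncard_diffSet_add_eq_iff (hU x y).1 (hU y z).1

lemma isHammingIsometric_of_exists_adj_hammingBtw {U : Set (Λ → Bool)}
    (hfin : ∀ x y : U, (diffSet (x : Λ → Bool) y).Finite)
    (hstep : ∀ x z : U, x ≠ z →
      ∃ y, (pcGraph U).Adj x y ∧ HammingBtw (x : Λ → Bool) y z) :
    IsHammingIsometric U := by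
  suffices hwalk : ∀ (n : ℕ) (x z : U), (diffSet (x : Λ → Bool) z).ncard = n →
      ∃ w : (pcGraph U).Walk x z, w.length = n by
    intro x z
    obtain ⟨w, hw⟩ := hwalk _ x z rfl
    exact ⟨hfin x z,
      le_antisymm (hw ▸ SimpleGraph.dist_le w) (ncard_diffSet_le_dist ⟨w⟩).2⟩
  intro n
  induction n with
  | zero =>
    intro x z hxz
    obtain rfl : x = z :=
      Subtype.ext <| diffSet_eq_empty_iff.mp <| (Set.ncard_eq_zero (hfin x z)).mp hxz
    exact ⟨.nil, rfl⟩
  | succ n ih =>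
    intro x z hxz
    have hne : x ≠ z := by rintro rfl; simp [diffSet_eq_empty_iff.mpr rfl] at hxz
    obtain ⟨y, hxy, hbtw⟩ := hstep x z hne
    obtain ⟨f, hf⟩ := qcube_adj_iff.mp (pcGraph_adj_iff_s15.mp hxy)
    have hadd := (ncard_diffSet_add_eq_iff (hfin x y) (hfin y z)).mpr hbtw
    rw [hf, Set.ncard_singleton] at hadd
    obtain ⟨w, hw⟩ := ih y z (by omega)
    exact ⟨.cons hxy w, by rw [SimpleGraph.Walk.length_cons, hw]⟩

lemma IsHammingIsometric.isGatedSet_iff {U : Set (Λ → Bool)} (hU : IsHammingIsometric U)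
    (S : Set U) : (pcGraph U).IsGatedSet S ↔
      ∀ x : U, ∃ g ∈ S, ∀ y ∈ S, HammingBtw (x : Λ → Bool) g y := by
  simp only [SimpleGraph.IsGatedSet, hU.dist_add_dist_eq_iff]

section Convexity

variable {V V' W W' S : Set (Λ → Bool)}

lemma GatedIn.convexIn (hV : (pcGraph V).Connected) (hS : GatedIn V S) : ConvexIn V S := by
  refine ⟨hS.1, fun u v w hu hv huwv => ?_⟩
  obtain ⟨g, hgS, hgate⟩ := hS.2 w
  have hwu := hgate u hu
  have hwv := hgate v hv
  have htri : (pcGraph V).dist u v ≤ (pcGraph V).dist u g + (pcGraph V).dist g v :=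
    hV.dist_triangle
  rw [SimpleGraph.dist_comm (u := w), SimpleGraph.dist_comm (u := g)] at hwu
  have hwg : w = g := hV.dist_eq_zero_iff.mp (by omega)
  exact hwg ▸ hgS

lemma ConvexIn.inter (hW : ConvexIn V W) (hW' : ConvexIn V W') : ConvexIn V (W ∩ W') :=
  ⟨fun _ hx => hW.1 hx.1, fun u v w hu hv huwv =>
    ⟨hW.2 u v w hu.1 hv.1 huwv, hW'.2 u v w hu.2 hv.2 huwv⟩⟩

lemma ConvexIn.of_subset (hV : IsHammingIsometric V) (hV' : IsHammingIsometric V')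
    (hV'V : V' ⊆ V) (hW : ConvexIn V W) (hWV' : W ⊆ V') : ConvexIn V' W := by
  refine ⟨hWV', fun u v w hu hv huwv => ?_⟩
  rw [hV'.dist_add_dist_eq_iff] at huwv
  exact hW.2 ⟨u, hV'V u.2⟩ ⟨v, hV'V v.2⟩ ⟨w, hV'V w.2⟩ hu hv
    ((hV.dist_add_dist_eq_iff _ _ _).mpr huwv)

lemma GatedIn.exists_gate_mem_inter (hS : GatedIn V S) (hV : IsHammingIsometric V)
    (hW : ConvexIn V W) (hWS : (W ∩ S).Nonempty) {x : Λ → Bool} (hx : x ∈ W) :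
    ∃ g ∈ W ∩ S, ∀ y ∈ S, HammingBtw x g y := by
  obtain ⟨y₀, hy₀W, hy₀S⟩ := hWS
  obtain ⟨g, hgS, hgate⟩ := hS.2 ⟨x, hW.1 hx⟩
  have hgW : (g : Λ → Bool) ∈ W :=
    hW.2 _ ⟨y₀, hW.1 hy₀W⟩ g hx hy₀W (hgate _ hy₀S).symm
  exact ⟨g, ⟨hgW, hgS⟩, fun y hy =>
    (hV.dist_add_dist_eq_iff _ _ ⟨y, hS.1 hy⟩).mp (hgate _ hy).symm⟩

end Convexity

section Projection

variable {V W S : Set (Λ → Bool)} {B : Set Λ} {x y z : Λ → Bool}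

lemma diffSet_proj (B : Set Λ) (x y : Λ → Bool) :
    diffSet (proj B x) (proj B y) = Subtype.val ⁻¹' diffSet x y := rfl

lemma HammingBtw.proj (h : HammingBtw x y z) (B : Set Λ) :
    HammingBtw (proj B x) (proj B y) (proj B z) := fun f => h f

lemma HammingBtw.trans_right {y' : Λ → Bool} (h : HammingBtw x y z) (h' : HammingBtw y y' z) :
    HammingBtw x y' z := fun f => (h' f).elim (fun e => e ▸ h f) Or.inr

lemma qcube_adj_proj_or_eq (h : (Qcube Λ).Adj x y) (B : Set Λ) :
    (Qcube _).Adj (proj B x) (proj B y) ∨ proj B x = proj B y := by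
  obtain ⟨f, hf⟩ := qcube_adj_iff.mp h
  by_cases hfB : f ∈ B
  · refine Or.inr (funext fun g => not_not.mp fun hg => g.2 ?_)
    have : g.1 ∈ diffSet x y := hg
    rw [hf] at this
    rwa [Set.mem_singleton_iff.mp this]
  · refine Or.inl (qcube_adj_iff.mpr ⟨⟨f, hfB⟩, ?_⟩)
    rw [diffSet_proj, hf]
    ext g
    simp [Subtype.ext_iff]

/-- Along a geodesic of `V` from `x` to `y` (which stays in the convex set `W`), the first edge
not in a contracted class gives a neighbour of `proj B x` towards `proj B y`. -/
lemma exists_adj_proj_hammingBtw (hV : IsPartialCube V) (hW : ConvexIn V W) (B : Set Λ)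
    (hx : x ∈ W) (hy : y ∈ W) (hne : proj B x ≠ proj B y) :
    ∃ z ∈ W, (Qcube _).Adj (proj B x) (proj B z) ∧ HammingBtw x z y := by
  obtain ⟨n, hn⟩ : ∃ n, (pcGraph V).dist ⟨x, hW.1 hx⟩ ⟨y, hW.1 hy⟩ = n := ⟨_, rfl⟩
  induction n using Nat.strong_induction_on generalizing x with
  | _ n ih =>
  have hxy : (⟨x, hW.1 hx⟩ : V) ≠ ⟨y, hW.1 hy⟩ := fun h =>
    hne (congrArg (proj B ∘ Subtype.val) h)
  obtain ⟨z, hxz, hzy⟩ := (hV.1 _ _).exists_adj_dist_add_one hxy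
  have hgeod : (pcGraph V).dist ⟨x, hW.1 hx⟩ z + (pcGraph V).dist z ⟨y, hW.1 hy⟩ =
      (pcGraph V).dist ⟨x, hW.1 hx⟩ ⟨y, hW.1 hy⟩ := by
    rw [SimpleGraph.dist_eq_one_iff_adj.mpr hxz]
    omega
  have hzW : (z : Λ → Bool) ∈ W := hW.2 _ _ z hx hy hgeod
  have hbtw := (hV.isHammingIsometric.dist_add_dist_eq_iff _ _ _).mp hgeod
  rcases qcube_adj_proj_or_eq (pcGraph_adj_iff_s15.mp hxz) B with hadj | heq
  · exact ⟨z, hzW, hadj, hbtw⟩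
  · have hlt : (pcGraph V).dist z ⟨y, hW.1 hy⟩ < n := by
      rw [← hn, ← hzy]
      exact Nat.lt_succ_self _
    obtain ⟨z', hz'W, hadj', hbtw'⟩ := ih _ hlt hzW (heq ▸ hne) rfl
    exact ⟨z', hz'W, heq ▸ hadj', hbtw.trans_right hbtw'⟩

lemma isHammingIsometric_proj_image (hV : IsPartialCube V) (hW : ConvexIn V W) (B : Set Λ) :
    IsHammingIsometric (proj B '' W) := by
  apply isHammingIsometric_of_exists_adj_hammingBtw
  · rintro ⟨_, x, hx, rfl⟩ ⟨_, y, hy, rfl⟩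
    exact (hV.isHammingIsometric ⟨x, hW.1 hx⟩ ⟨y, hW.1 hy⟩).1.preimage
      Subtype.val_injective.injOn
  · rintro ⟨_, x, hx, rfl⟩ ⟨_, y, hy, rfl⟩ hne
    obtain ⟨z, hzW, hadj, hbtw⟩ :=
      exists_adj_proj_hammingBtw hV hW B hx hy fun h => hne (Subtype.ext h)
    exact ⟨⟨proj B z, z, hzW, rfl⟩, hadj, hbtw.proj B⟩

lemma isGatedSet_proj_image_inter (hV : IsPartialCube V) (hW : ConvexIn V W)
    (hS : GatedIn V S) (hWS : (W ∩ S).Nonempty) (B : Set Λ) :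
    (pcGraph (proj B '' W)).IsGatedSet (Subtype.val ⁻¹' (proj B '' (W ∩ S))) := by
  rw [(isHammingIsometric_proj_image hV hW B).isGatedSet_iff]
  rintro ⟨_, x, hx, rfl⟩
  obtain ⟨g, ⟨hgW, hgS⟩, hgate⟩ := hS.exists_gate_mem_inter hV.isHammingIsometric hW hWS hx
  refine ⟨⟨proj B g, g, hgW, rfl⟩, ⟨g, ⟨hgW, hgS⟩, rfl⟩, ?_⟩
  rintro _ ⟨y, ⟨-, hyS⟩, hy⟩
  exact hy ▸ (hgate y hyS).proj B

end Projection

section Q3minus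

instance : DecidablePred (· ∈ Q3minusSet) :=
  inferInstanceAs (DecidablePred fun x : Fin 3 → Bool => x ≠ fun _ => true)

lemma isHammingIsometric_q3minus : IsHammingIsometric Q3minusSet := by
  refine isHammingIsometric_of_exists_adj_hammingBtw (fun _ _ => Set.toFinite _) ?_
  rintro ⟨x, hx⟩ ⟨z, hz⟩ hne
  -- a shortest path can always avoid the missing vertex `111`
  obtain ⟨i, hi, hmem⟩ : ∃ i, x i ≠ z i ∧ Function.update x i (z i) ∈ Q3minusSet := by
    have hne' : x ≠ z := fun h => hne (Subtype.ext h)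
    revert x z
    decide
  refine ⟨⟨_, hmem⟩, ⟨i, by simpa using hi, fun g hg => by simp [hg]⟩, fun f => ?_⟩
  by_cases hf : f = i
  · subst hf; simp
  · simp [hf]

-- Subsets of `Q₃⁻` are encoded as `Bool`-valued predicates so that all `2⁷` of them can be
-- checked by `decide`.
set_option maxRecDepth 4000 in
lemma forall_or_exists_halfspace_of_gated_pred_q3minus : ∀ p : Q3minusSet → Bool,
    (∀ a : Q3minusSet, ∃ b, p b ∧ ∀ c, p c → HammingBtw (a : Fin 3 → Bool) b c) →
      (∀ a, p a) ∨ ∃ i, ∀ a, p a → (a : Fin 3 → Bool) i = false := by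
  unfold HammingBtw
  decide

lemma eq_univ_or_subset_halfspace_of_isGatedSet_q3minus {S : Set Q3minusSet}
    (hS : (pcGraph Q3minusSet).IsGatedSet S) :
    S = Set.univ ∨ ∃ i, ∀ a ∈ S, (a : Fin 3 → Bool) i = false := by
  classical
  rw [isHammingIsometric_q3minus.isGatedSet_iff] at hS
  have hgated : ∀ a : Q3minusSet, ∃ b, decide (b ∈ S) ∧
      ∀ c, decide (c ∈ S) → HammingBtw (a : Fin 3 → Bool) b c := fun a => by
    obtain ⟨b, hb, hgate⟩ := hS a
    exact ⟨b, decide_eq_true hb, fun c hc => hgate c (of_decide_eq_true hc)⟩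
  simpa [Set.eq_univ_iff_forall] using forall_or_exists_halfspace_of_gated_pred_q3minus _ hgated

/-- Two halfspaces `x i = 0`, `x j = 0` of `Q₃⁻` miss the vertex that is `0` only at a third
coordinate `k`. -/
lemma eq_univ_or_eq_univ_of_isGatedSet_q3minus {S T : Set Q3minusSet}
    (hS : (pcGraph Q3minusSet).IsGatedSet S) (hT : (pcGraph Q3minusSet).IsGatedSet T)
    (hcover : S ∪ T = Set.univ) : S = Set.univ ∨ T = Set.univ := by
  rcases eq_univ_or_subset_halfspace_of_isGatedSet_q3minus hS with hS | ⟨i, hi⟩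
  · exact Or.inl hS
  rcases eq_univ_or_subset_halfspace_of_isGatedSet_q3minus hT with hT | ⟨j, hj⟩
  · exact Or.inr hT
  obtain ⟨k, hki, hkj⟩ := (by decide : ∀ i j : Fin 3, ∃ k, k ≠ i ∧ k ≠ j) i j
  let w : Q3minusSet := ⟨fun m => decide (m ≠ k), fun h => by simpa using congrFun h k⟩
  rcases hcover.symm ▸ Set.mem_univ w with hw | hw
  · simpa [w, Ne.symm hki] using hi w hw
  · simpa [w, Ne.symm hkj] using hj w hw

end Q3minus

lemma proj_image_inter_eq_of_preimage_eq_univ {W S : Set (Λ → Bool)} {B : Set Λ}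
    (h : Subtype.val ⁻¹' (proj B '' (W ∩ S)) = (Set.univ : Set (proj B '' W))) :
    proj B '' (W ∩ S) = proj B '' W :=
  (Set.image_mono Set.inter_subset_left).antisymm fun p hp =>
    Set.eq_univ_iff_forall.mp h ⟨p, hp⟩

lemma proj_image_inter_eq_of_iso_q3minus {V V₁ V₂ W : Set (Λ → Bool)} {B : Set Λ}
    (hV : IsPartialCube V) (hV₁ : GatedIn V V₁) (hV₂ : GatedIn V V₂)
    (hunion : V₁ ∪ V₂ = V) (hW : ConvexIn V W)
    (φ : pcGraph (proj B '' W) ≃g pcGraph Q3minusSet) :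
    proj B '' (W ∩ V₁) = proj B '' W ∨ proj B '' (W ∩ V₂) = proj B '' W := by
  have hWV : W ⊆ V₁ ∪ V₂ := hunion ▸ hW.1
  by_cases hW₁ : (W ∩ V₁).Nonempty
  swap
  · refine Or.inr (congrArg _ (Set.inter_eq_left.mpr fun x hx => ?_))
    exact (hWV hx).resolve_left fun h => hW₁ ⟨x, hx, h⟩
  by_cases hW₂ : (W ∩ V₂).Nonempty
  swap
  · refine Or.inl (congrArg _ (Set.inter_eq_left.mpr fun x hx => ?_))
    exact (hWV hx).resolve_right fun h => hW₂ ⟨x, hx, h⟩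
  have hcover : φ '' (Subtype.val ⁻¹' (proj B '' (W ∩ V₁))) ∪
      φ '' (Subtype.val ⁻¹' (proj B '' (W ∩ V₂))) = Set.univ := by
    rw [← Set.image_union, ← Set.image_univ_of_surjective φ.surjective]
    congr 1
    refine Set.eq_univ_of_forall ?_
    rintro ⟨_, x, hx, rfl⟩
    exact (hWV hx).imp (fun h => ⟨x, ⟨hx, h⟩, rfl⟩) (fun h => ⟨x, ⟨hx, h⟩, rfl⟩)
  have hpullback : ∀ {T : Set (proj B '' W)}, φ '' T = Set.univ → T = Set.univ := fun hT =>
    Set.eq_univ_of_forall fun p => φ.injective.mem_set_image.mp (hT ▸ Set.mem_univ (φ p))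
  refine (eq_univ_or_eq_univ_of_isGatedSet_q3minus
    ((isGatedSet_proj_image_inter hV hW hV₁ hW₁ B).image_iso φ)
    ((isGatedSet_proj_image_inter hV hW hV₂ hW₂ B).image_iso φ) hcover).imp ?_ ?_ <;>
  exact fun h => proj_image_inter_eq_of_preimage_eq_univ (hpullback h)

theorem stmt15_general (V V1 V2 : Set (Λ → Bool)) (hV : IsPartialCube V)
    (hg1 : GatedIn V V1) (hg2 : GatedIn V V2)
    (hunion : V1 ∪ V2 = V)
    (h1 : Hypercellular V1) (h2 : Hypercellular V2) :
    Hypercellular V := by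
  refine ⟨hV, fun B W hW => ⟨fun φ => ?_⟩⟩
  have hne : ∀ Vi, GatedIn V Vi → Hypercellular Vi →
      proj B '' (W ∩ Vi) ≠ proj B '' W := by
    intro Vi hgi hhi heq
    have hconv : ConvexIn Vi (W ∩ Vi) :=
      (hW.inter (hgi.convexIn hV.1)).of_subset hV.isHammingIsometric hhi.1.isHammingIsometric
        hgi.1 Set.inter_subset_right
    have hempty := hhi.2 B _ hconv
    rw [heq] at hempty
    exact hempty.false φ
  rcases proj_image_inter_eq_of_iso_q3minus hV hg1 hg2 hunion hW φ with h | h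
  exacts [hne V1 hg1 h1 h, hne V2 hg2 h2 h]

/-- If a partial cube `G` is a gated amalgam of two partial cubes `G₁`, `G₂`
each of which excludes `Q₃⁻` as a pc-minor, then `G` excludes `Q₃⁻` as well. -/
theorem stmt15 (V V1 V2 : Set (Λ → Bool)) (hV : IsPartialCube V)
    (hg1 : GatedIn V V1) (hg2 : GatedIn V V2)
    (hunion : V1 ∪ V2 = V) (hinter : (V1 ∩ V2).Nonempty)
    (h1 : Hypercellular V1) (h2 : Hypercellular V2) :
    Hypercellular V :=
  stmt15_general V V1 V2 hV hg1 hg2 hunion h1 h2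
end
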